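/- On ℝ³ let ⟨x,y⟩₁,₂ := −x₁y₁ + x₂y₂ + x₃y₃, and let ×' be the Minkowski cross product, i.e. the antisymmetric bilinear map with e₁ ×' e₂ = e₃, e₂ ×' e₃ = −e₁, e₃ ×' e₁ = e₂. Let A be a 3×3 real matrix with ⟨Ax,Ay⟩₁,₂ = ⟨x,y⟩₁,₂ for all x,y and det A = 1, and suppose A ≠ I. If u ∈ ℝ³ satisfies A·u = u and ⟨u,u⟩₁,₂ = −1 (u is a timelike unit vector fixed by A), then for every b ∈ ℝ³ there exists v ∈ ℝ³ with ⟨v,u⟩₁,₂ = 0 and A·v + b ×' u = v. In particular, the element (b,A) of ℝ³ ⋊ SO(1,2) then has a fixed point (v,u) on the model {(v,u) : ⟨u,u⟩₁,₂ = −1, ⟨u,v⟩₁,₂ = 0} of Z(−1,c). -/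

import Mathlib

/-!
Since `A` preserves `⟨·,·⟩₁,₂`, it maps the plane `u^⊥` to itself, and this plane is spacelike
because `u` is timelike. If `A` fixed a nonzero `z ∈ u^⊥`, then, having determinant `1`, it would
also fix `u ×' z`; as `u, z, u ×' z` is a basis, `A = 1`. Hence `1 - A` is injective on `u^⊥`,
so it maps `u^⊥` onto itself, and `b ×' u ∈ u^⊥`.
-/

/-- The Minkowski inner product `⟨x,y⟩₁,₂ = −x₁y₁ + x₂y₂ + x₃y₃` on `ℝ³`. -/
def mdot (x y : Fin 3 → ℝ) : ℝ := -(x 0 * y 0) + x 1 * y 1 + x 2 * y 2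

/-- The Minkowski cross product on `ℝ³`: `x ×' y = η (x × y)` with `η = diag(−1,1,1)`,
so that `e₁ ×' e₂ = e₃`, `e₂ ×' e₃ = −e₁`, `e₃ ×' e₁ = e₂`. -/
def mcross (x y : Fin 3 → ℝ) : Fin 3 → ℝ :=
  ![-(x 1 * y 2 - x 2 * y 1), x 2 * y 0 - x 0 * y 2, x 0 * y 1 - x 1 * y 0]

open Matrix

lemma mdot_add_left (x y z : Fin 3 → ℝ) : mdot (x + y) z = mdot x z + mdot y z := by
  simp only [mdot, Pi.add_apply]; ring

lemma mdot_sub_left (x y z : Fin 3 → ℝ) : mdot (x - y) z = mdot x z - mdot y z := by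
  simp only [mdot, Pi.sub_apply]; ring

lemma mdot_smul_left (t : ℝ) (x y : Fin 3 → ℝ) : mdot (t • x) y = t * mdot x y := by
  simp only [mdot, Pi.smul_apply, smul_eq_mul]; ring

lemma mdot_mcross_eq_det (x y w : Fin 3 → ℝ) : mdot (mcross x y) w = (of ![x, y, w]).det := by
  simp [mdot, mcross, det_fin_three]; ring

lemma mdot_mcross_self (x y : Fin 3 → ℝ) :
    mdot (mcross x y) (mcross x y) = mdot x y ^ 2 - mdot x x * mdot y y := by
  simp [mdot, mcross]; ring

lemma mdot_mcross_right (x y : Fin 3 → ℝ) : mdot (mcross x y) y = 0 := by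
  simp [mdot, mcross]; ring

lemma eq_of_forall_mdot_eq {p q : Fin 3 → ℝ} (h : ∀ w, mdot p w = mdot q w) : p = q := by
  ext i
  have := h (Pi.single i 1)
  fin_cases i <;> simpa [mdot] using this

lemma mdot_self_pos {u w : Fin 3 → ℝ} (hu : mdot u u < 0) (hwu : mdot w u = 0) (hw : w ≠ 0) :
    0 < mdot w w := by
  simp only [mdot] at *
  by_contra! h
  apply hw
  have hwu' : w 0 * u 0 = w 1 * u 1 + w 2 * u 2 := by linarith
  have hcs : (w 0 * u 0) ^ 2 ≤ (w 1 ^ 2 + w 2 ^ 2) * (u 1 ^ 2 + u 2 ^ 2) := by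
    rw [hwu']; nlinarith [sq_nonneg (w 1 * u 2 - w 2 * u 1)]
  have hs : (w 1 ^ 2 + w 2 ^ 2) * (u 0 ^ 2 - (u 1 ^ 2 + u 2 ^ 2)) ≤ 0 := by
    nlinarith [mul_le_mul_of_nonneg_right h (sq_nonneg (u 0))]
  have ht : 0 < u 0 ^ 2 - (u 1 ^ 2 + u 2 ^ 2) := by linarith
  have hs0 : w 1 ^ 2 + w 2 ^ 2 = 0 :=
    le_antisymm (nonpos_of_mul_nonpos_left hs ht) (by positivity)
  have h1 : w 1 = 0 := by nlinarith [sq_nonneg (w 1), sq_nonneg (w 2)]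
  have h2 : w 2 = 0 := by nlinarith [sq_nonneg (w 1), sq_nonneg (w 2)]
  have hu0 : u 0 ≠ 0 := by rintro h0; nlinarith [h0]
  have h0 : w 0 = 0 := by simpa [h1, h2, hu0] using hwu'
  ext i; fin_cases i <;> simp [h0, h1, h2]

lemma of_mulVec_eq_mul_transpose {R : Type*} [CommSemiring R] (A : Matrix (Fin 3) (Fin 3) R)
    (x y w : Fin 3 → R) :
    of ![A *ᵥ x, A *ᵥ y, A *ᵥ w] = of ![x, y, w] * Aᵀ := by
  ext i : 1
  rw [mul_apply_eq_vecMul, vecMul_transpose]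
  fin_cases i <;> rfl

section Isometry

variable {A : Matrix (Fin 3) (Fin 3) ℝ}
  (hA : ∀ x y : Fin 3 → ℝ, mdot (A *ᵥ x) (A *ᵥ y) = mdot x y)
include hA

lemma mulVec_mcross (hdet : A.det = 1) (x y : Fin 3 → ℝ) :
    A *ᵥ mcross x y = mcross (A *ᵥ x) (A *ᵥ y) := by
  have hsurj : Function.Surjective (A *ᵥ ·) :=
    mulVec_surjective_iff_isUnit.mpr ((isUnit_iff_isUnit_det A).mpr (by simp [hdet]))
  refine eq_of_forall_mdot_eq fun w' => ?_
  obtain ⟨w, rfl⟩ := hsurj w'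
  rw [hA, mdot_mcross_eq_det, mdot_mcross_eq_det, of_mulVec_eq_mul_transpose, det_mul,
    det_transpose, hdet, mul_one]

lemma eq_one_of_mulVec_eq_self (hdet : A.det = 1) {u z : Fin 3 → ℝ} (hAu : A *ᵥ u = u)
    (hu : mdot u u < 0) (hAz : A *ᵥ z = z) (hzu : mdot z u = 0) (hz : z ≠ 0) : A = 1 := by
  set w := mcross u z
  have hAw : A *ᵥ w = w := by rw [mulVec_mcross hA hdet, hAu, hAz]
  have hdetP : (of ![u, z, w]).det ≠ 0 := by
    rw [← mdot_mcross_eq_det, mdot_mcross_self]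
    nlinarith [mdot_self_pos hu hzu hz]
  have hP : of ![u, z, w] * Aᵀ = of ![u, z, w] * 1 := by
    rw [← of_mulVec_eq_mul_transpose, hAu, hAz, hAw, mul_one]
  exact transpose_eq_one.mp (((isUnit_iff_isUnit_det _).mpr hdetP.isUnit).mul_left_cancel hP)

lemma exists_mdot_eq_zero_and_sub_mulVec_eq (hdet : A.det = 1)
    (hAne : A ≠ 1) {u : Fin 3 → ℝ} (hAu : A *ᵥ u = u) (huu : mdot u u = -1)
    {c : Fin 3 → ℝ} (hc : mdot c u = 0) : ∃ v, mdot v u = 0 ∧ v - A *ᵥ v = c := by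
  have hAxu : ∀ x, mdot (A *ᵥ x) u = mdot x u := fun x => by simpa [hAu] using hA x u
  -- `1 - A` plus the rank-one map `x ↦ ⟨x,u⟩ u`: injective on `ℝ³`, and equal to `1 - A` on `u^⊥`.
  let g : (Fin 3 → ℝ) →ₗ[ℝ] (Fin 3 → ℝ) :=
    { toFun := fun x => x - A *ᵥ x + mdot x u • u
      map_add' := fun x y => by simp only [mulVec_add, mdot_add_left, add_smul]; abel
      map_smul' := fun t x => by
        simp only [mulVec_smul, mdot_smul_left, mul_smul, RingHom.id_apply, smul_add, smul_sub] }
  have hg : ∀ x, mdot (g x) u = -mdot x u := fun x => by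
    simp only [g, LinearMap.coe_mk, AddHom.coe_mk, mdot_add_left, mdot_sub_left, mdot_smul_left,
      hAxu, huu]
    ring
  have hinj : Function.Injective g := by
    refine (injective_iff_map_eq_zero g).mpr fun x hx => ?_
    have hxu : mdot x u = 0 := by
      have h0 : mdot 0 u = 0 := by simp [mdot]
      linarith [hg x, congrArg (mdot · u) hx]
    have hAx : A *ᵥ x = x := by
      simpa [g, hxu, sub_eq_zero, eq_comm] using hx
    by_contra hx0
    exact hAne (eq_one_of_mulVec_eq_self hA hdet hAu (by linarith) hAx hxu hx0)
  obtain ⟨v, hv⟩ := LinearMap.injective_iff_surjective.mp hinj c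
  have hvu : mdot v u = 0 := by linarith [hg v, congrArg (mdot · u) hv]
  exact ⟨v, hvu, by simpa [g, hvu] using hv⟩

end Isometry

/-- If `A ∈ SO(1,2)`, `A ≠ I`, fixes a timelike unit vector `u`
(`Au = u`, `⟨u,u⟩₁,₂ = −1`), then for every `b ∈ ℝ³` there exists `v ⊥ u` with
`Av + b ×' u = v`; i.e. `(b,A) ∈ ℝ³ ⋊ SO(1,2)` has a fixed point `(v,u)` on the model
of `Z(−1,c)`. -/
theorem stmt9 (A : Matrix (Fin 3) (Fin 3) ℝ)
    (hA : ∀ x y : Fin 3 → ℝ, mdot (A.mulVec x) (A.mulVec y) = mdot x y)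
    (hdet : A.det = 1) (hAne : A ≠ 1)
    (u : Fin 3 → ℝ) (hu : A.mulVec u = u) (huu : mdot u u = -1) :
    ∀ b : Fin 3 → ℝ, ∃ v : Fin 3 → ℝ, mdot v u = 0 ∧ A.mulVec v + mcross b u = v := by
  intro b
  obtain ⟨v, hvu, hv⟩ :=
    exists_mdot_eq_zero_and_sub_mulVec_eq hA hdet hAne hu huu (mdot_mcross_right b u)
  exact ⟨v, hvu, by rw [← hv]; abel⟩
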